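/- arXiv:math/0202228 — 6 statements merged into one kernel-verified Lean document; each statement's English description precedes it below -/
import Mathlib

section
/- Let M be a Garside monoid with Garside element Δ and simple divisors D. If g ∈ M is not left-divisible by Δ and η ∈ D, then g·η is not left-divisible by Δ² (equivalently: the left greedy normal form of g·η begins with at most one Δ). -/
namespace Garside

variable {M : Type*} [Monoid M]

/-- `a` left-divides `b`. -/
def LDvd (a b : M) : Prop := ∃ c, b = a * c

/-- `a` right-divides `b`. -/
def RDvd (a b : M) : Prop := ∃ c, b = c * a

/-- `m` is indivisible (an atom). -/
def Indec (m : M) : Prop := m ≠ 1 ∧ ∀ a b : M, m = a * b → a = 1 ∨ b = 1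

/-- The set of lengths of expressions of `m` as a product of atoms. -/
def exprLengths (m : M) : Set ℕ :=
  {n | ∃ l : List M, (∀ x ∈ l, Indec x) ∧ l.prod = m ∧ l.length = n}

/-- The norm `‖m‖`: supremum of lengths of expressions of `m` as products of atoms. -/
noncomputable def norm (m : M) : ℕ := sSup (exprLengths m)

/-- `M` is a Garside monoid with Garside element `Δ`. -/
structure IsGarside (M : Type*) [Monoid M] (Δ : M) : Prop where
  /- atomicity: every element is a product of atoms, with bounded expression lengths -/
  expr_nonempty : ∀ m : M, (exprLengths m).Nonempty
  expr_bdd : ∀ m : M, BddAbove (exprLengths m)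
  mul_left_cancel : ∀ a b c : M, a * b = a * c → b = c
  mul_right_cancel : ∀ a b c : M, b * a = c * a → b = c
  exists_lgcd : ∀ a b : M, ∃ d, LDvd d a ∧ LDvd d b ∧ ∀ e, LDvd e a → LDvd e b → LDvd e d
  exists_llcm : ∀ a b : M, ∃ l, LDvd a l ∧ LDvd b l ∧ ∀ e, LDvd a e → LDvd b e → LDvd l e
  exists_rgcd : ∀ a b : M, ∃ d, RDvd d a ∧ RDvd d b ∧ ∀ e, RDvd e a → RDvd e b → RDvd e d
  exists_rlcm : ∀ a b : M, ∃ l, RDvd a l ∧ RDvd b l ∧ ∀ e, RDvd a e → RDvd b e → RDvd l e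
  divisor_iff : ∀ x : M, LDvd x Δ ↔ RDvd x Δ
  divisors_finite : {x : M | LDvd x Δ}.Finite
  generates : Submonoid.closure {x : M | LDvd x Δ} = ⊤

/-- The set of simple divisors of the Garside element. -/
def SimpleDivs (Δ : M) : Set M := {x : M | LDvd x Δ}

/-- `G`, with an injective monoid homomorphism `ι : M →* G`, is the group of fractions
of the monoid `M`. -/
structure IsGroupOfFractions (M G : Type*) [Monoid M] [Group G] (ι : M →* G) : Prop where
  injective : Function.Injective ι
  fraction : ∀ g : G, ∃ a b : M, g = ι a * (ι b)⁻¹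

end Garside


/-!
Δ is quasi-central: since every simple `s` satisfies `Δ = p * s` and `Δ = q * p` for some `p, q`,
we get `Δ * s = q * Δ`, and as the simples generate `M`, every `x` has some `w` with
`Δ * x = w * Δ`; hence `a * Δ ∣ g * Δ` forces `a ∣ g` by right cancellation.
If `g * η = Δ * Δ * c` with `η * ζ = Δ`, then `g * Δ = Δ * Δ * (c * ζ)`, so `Δ ∣ g`.
-/

namespace Garside

variable {M : Type*} [Monoid M] {Δ : M}

theorem exists_mul_delta_eq_delta_mul_of_ldvd (hdiv : ∀ x : M, LDvd x Δ → RDvd x Δ)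
    {s : M} (hs : LDvd s Δ) : ∃ w, w * Δ = Δ * s := by
  obtain ⟨p, hp⟩ := hdiv s hs
  obtain ⟨q, hq⟩ := hdiv p ⟨s, hp⟩
  refine ⟨q, ?_⟩
  calc q * Δ = q * p * s := by rw [mul_assoc, ← hp]
    _ = Δ * s := by rw [← hq]

theorem exists_mul_delta_eq_delta_mul (hdiv : ∀ x : M, LDvd x Δ → RDvd x Δ)
    (hgen : Submonoid.closure {x : M | LDvd x Δ} = ⊤) (x : M) : ∃ w, w * Δ = Δ * x := by
  have hx : x ∈ Submonoid.closure {x : M | LDvd x Δ} := hgen ▸ Submonoid.mem_top x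
  induction hx using Submonoid.closure_induction with
  | mem s hs => exact exists_mul_delta_eq_delta_mul_of_ldvd hdiv hs
  | one => exact ⟨1, by rw [one_mul, mul_one]⟩
  | mul a b _ _ ha hb =>
    obtain ⟨u, hu⟩ := ha
    obtain ⟨v, hv⟩ := hb
    exact ⟨u * v, by rw [mul_assoc, hv, ← mul_assoc, hu, mul_assoc]⟩

theorem IsGarside.ldvd_of_mul_delta_ldvd_mul_delta (hG : IsGarside M Δ) {a g : M}
    (h : LDvd (a * Δ) (g * Δ)) : LDvd a g := by
  obtain ⟨c, hc⟩ := h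
  obtain ⟨w, hw⟩ :=
    exists_mul_delta_eq_delta_mul (fun x => (hG.divisor_iff x).mp) hG.generates c
  refine ⟨w, hG.mul_right_cancel Δ g (a * w) ?_⟩
  rw [hc, mul_assoc, mul_assoc, ← hw]

end Garside

open Garside in
/-- If `g ∈ M` is not left-divisible by `Δ` and `η` is a simple divisor,
then `g·η` is not left-divisible by `Δ²`. -/
theorem garside_mul_simple_not_deltaSq_dvd
    {M : Type*} [Monoid M] (Δ : M) (hG : IsGarside M Δ)
    (g η : M) (hg : ¬ LDvd Δ g) (hη : η ∈ SimpleDivs Δ) :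
    ¬ LDvd (Δ * Δ) (g * η) := by
  rintro ⟨c, hc⟩
  obtain ⟨ζ, hζ⟩ := hη
  have hgΔ : g * Δ = Δ * Δ * (c * ζ) := by rw [← mul_assoc, ← hc, mul_assoc, ← hζ]
  exact hg (hG.ldvd_of_mul_delta_ldvd_mul_delta ⟨c * ζ, hgΔ⟩)
end

section
/- Let M be a Garside monoid with Garside element Δ, let G be its group of fractions, let m be the least positive integer such that Δ^m is central in G, and let G_Δ = G/⟨Δ^m⟩. Then G_Δ contains only finitely many conjugacy classes of finite subgroups. -/
/-!
Garside groups are torsion-free: if `g ^ n = 1`, the meet of `1, g, …, g ^ (n - 1)` for the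
right-invariant order `g ≤ ι c * g` conjugates `g` to a positive element `c` with `c ^ n = 1`,
whence `c = 1`. The preimage in `G` of a finite subgroup of `G ⧸ ⟨Δ ^ m⟩` is therefore a
torsion-free group containing the central cyclic subgroup `⟨Δ ^ m⟩` with finite index; the
transfer into its centre shows that it is abelian, hence infinite cyclic, generated by a root `δ`
of `Δ ^ m`. The same meet argument conjugates `δ` to a positive `c` with `c ^ κ = Δ ^ m`, so `c`
is one of the finitely many left divisors of `Δ ^ m`.
-/

open Subgroup

theorem mul_comm_of_finiteIndex_center {Γ : Type*} [Group Γ] [(center Γ).FiniteIndex]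
    (htf : ∀ g : Γ, IsOfFinOrder g → g = 1) (a b : Γ) : a * b = b * a := by
  have hinj : Function.Injective (MonoidHom.transferCenterPow Γ) := by
    refine (injective_iff_map_eq_one _).2 fun g hg => htf g ?_
    refine isOfFinOrder_iff_pow_eq_one.2
      ⟨_, (FiniteIndex.index_ne_zero (H := center Γ)).bot_lt, ?_⟩
    rw [← MonoidHom.transferCenterPow_apply, hg, OneMemClass.coe_one]
  refine hinj (Subtype.ext ?_)
  simp only [map_mul, coe_mul]
  exact mem_center_iff.1 (MonoidHom.transferCenterPow Γ b).2 _

theorem isCyclic_of_finiteIndex_zpowers {Γ : Type*} [Group Γ]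
    (htf : ∀ g : Γ, IsOfFinOrder g → g = 1) {ζ : Γ} (hζ : ζ ∈ center Γ)
    [(zpowers ζ).FiniteIndex] : IsCyclic Γ := by
  have : (center Γ).FiniteIndex := finiteIndex_of_le (zpowers_le.2 hζ)
  have hcomm := mul_comm_of_finiteIndex_center htf
  have : (zpowers ζ).Normal := ⟨fun x hx g => by rwa [hcomm g x, mul_inv_cancel_right]⟩
  -- `Γ` is commutative, so `g ↦ g ^ index` is an injective homomorphism into `⟨ζ⟩`
  let f : Γ →* zpowers ζ :=
    MonoidHom.mk' (fun g => ⟨g ^ (zpowers ζ).index, pow_index_mem _ g⟩) fun a b =>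
      Subtype.ext (Commute.mul_pow (hcomm a b) _)
  refine isCyclic_of_injective f ((injective_iff_map_eq_one f).2 fun g hg => htf g ?_)
  exact isOfFinOrder_iff_pow_eq_one.2
    ⟨_, (FiniteIndex.index_ne_zero (H := zpowers ζ)).bot_lt, congrArg Subtype.val hg⟩

theorem exists_pow_eq_and_zpowers_eq_top {Γ : Type*} [Group Γ]
    (htf : ∀ g : Γ, IsOfFinOrder g → g = 1) {ζ : Γ} (hζ : ζ ∈ center Γ)
    [hfin : (zpowers ζ).FiniteIndex] :
    ∃ δ : Γ, ∃ κ : ℕ, 0 < κ ∧ δ ^ κ = ζ ∧ zpowers δ = ⊤ := by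
  have := isCyclic_of_finiteIndex_zpowers htf hζ
  obtain ⟨δ, hδ⟩ := IsCyclic.exists_generator (α := Γ)
  obtain ⟨t, rfl⟩ := mem_zpowers_iff.1 (hδ ζ)
  have htop : zpowers δ = ⊤ := eq_top_iff' _ |>.2 hδ
  rcases lt_trichotomy t 0 with ht | rfl | ht
  · refine ⟨δ⁻¹, t.natAbs, by omega, ?_, by rwa [zpowers_inv]⟩
    rw [inv_pow, ← zpow_natCast, ← zpow_neg, Int.ofNat_natAbs_of_nonpos ht.le, neg_neg]
  · -- `ζ = 1` has finite index, so `Γ` is finite, hence trivial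
    rw [zpow_zero, zpowers_one_eq_bot] at hfin
    have : Finite Γ := Nat.finite_of_card_ne_zero (index_bot (G := Γ) ▸ hfin.index_ne_zero)
    refine ⟨δ, 1, one_pos, ?_, htop⟩
    rw [htf δ (isOfFinOrder_of_finite δ), one_pow, one_zpow]
  · refine ⟨δ, t.natAbs, by omega, ?_, htop⟩
    rw [← zpow_natCast, Int.natAbs_of_nonneg ht.le]

theorem exists_pow_eq_map_zpowers_eq_of_finite {G : Type*} [Group G]
    (htf : ∀ g : G, IsOfFinOrder g → g = 1) {z : G} (hz : z ∈ center G) [(zpowers z).Normal]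
    (H : Subgroup (G ⧸ zpowers z)) [Finite H] :
    ∃ δ : G, ∃ κ : ℕ, 0 < κ ∧ δ ^ κ = z ∧
      (zpowers δ).map (QuotientGroup.mk' (zpowers z)) = H := by
  set q := QuotientGroup.mk' (zpowers z)
  have hq : Function.Surjective q := QuotientGroup.mk'_surjective _
  set K := H.comap q
  have hzK : z ∈ K := by
    rw [mem_comap, QuotientGroup.mk'_apply, (QuotientGroup.eq_one_iff z).2 (mem_zpowers z)]
    exact H.one_mem
  have hzpowers : zpowers (⟨z, hzK⟩ : K) = (zpowers z).subgroupOf K := by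
    ext ⟨x, hx⟩
    simp [mem_subgroupOf, mem_zpowers_iff, Subtype.ext_iff]
  have : (zpowers (⟨z, hzK⟩ : K)).FiniteIndex := by
    refine ⟨?_⟩
    rw [hzpowers, ← relIndex, ← QuotientGroup.ker_mk' (zpowers z), ← MonoidHom.comap_bot,
      relIndex_comap, map_comap_eq_self_of_surjective hq, relIndex_bot_left]
    exact Nat.card_pos.ne'
  obtain ⟨δ, κ, hκ, hδ, htop⟩ := exists_pow_eq_and_zpowers_eq_top
    (fun g hg => Subtype.ext (htf g (K.subtype.isOfFinOrder hg)))
    (ζ := ⟨z, hzK⟩) (mem_center_iff.2 fun g => Subtype.ext (mem_center_iff.1 hz g))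
  refine ⟨δ, κ, hκ, congrArg Subtype.val hδ, ?_⟩
  rw [← K.subtype_apply, ← MonoidHom.map_zpowers, htop, ← MonoidHom.range_eq_map,
    range_subtype, map_comap_eq_self_of_surjective hq]

namespace Garside

section Monoid

variable {M : Type*} [Monoid M] {Δ : M}

theorem add_mem_exprLengths {a b : M} {n k : ℕ} (ha : n ∈ exprLengths a)
    (hb : k ∈ exprLengths b) : n + k ∈ exprLengths (a * b) := by
  obtain ⟨la, hla, rfl, rfl⟩ := ha
  obtain ⟨lb, hlb, rfl, rfl⟩ := hb
  exact ⟨la ++ lb, fun x hx => (List.mem_append.1 hx).elim (hla x) (hlb x), List.prod_append,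
    List.length_append⟩

theorem eq_one_of_zero_mem_exprLengths {a : M} (h : 0 ∈ exprLengths a) : a = 1 := by
  obtain ⟨l, -, rfl, hl⟩ := h
  rw [List.length_eq_zero_iff.1 hl, List.prod_nil]

namespace IsGarside

variable (hG : IsGarside M Δ)
include hG

-- expressions of `1` can be repeated, and their lengths are bounded
theorem eq_zero_of_mem_exprLengths_one {n : ℕ} (hn : n ∈ exprLengths (1 : M)) : n = 0 := by
  have hmul : ∀ k : ℕ, k * n ∈ exprLengths (1 : M) := by
    intro k
    induction k with
    | zero => exact ⟨[], by simp, List.prod_nil, by simp⟩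
    | succ k ih => simpa [Nat.succ_mul] using add_mem_exprLengths ih hn
  obtain ⟨B, hB⟩ := hG.expr_bdd 1
  have := hB (hmul (B + 1))
  by_contra h
  nlinarith [Nat.pos_of_ne_zero h]

theorem eq_one_of_mul_eq_one {a b : M} (h : a * b = 1) : a = 1 := by
  obtain ⟨na, hna⟩ := hG.expr_nonempty a
  obtain ⟨nb, hnb⟩ := hG.expr_nonempty b
  have := hG.eq_zero_of_mem_exprLengths_one (h ▸ add_mem_exprLengths hna hnb)
  obtain rfl : na = 0 := by omega
  exact eq_one_of_zero_mem_exprLengths hna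

theorem norm_mem_exprLengths (a : M) : norm a ∈ exprLengths a :=
  Nat.sSup_mem (hG.expr_nonempty a) (hG.expr_bdd a)

theorem norm_le_norm_of_ldvd {a b : M} (h : LDvd a b) : norm a ≤ norm b := by
  obtain ⟨c, rfl⟩ := h
  exact (Nat.le_add_right _ _).trans <| le_csSup (hG.expr_bdd _) <|
    add_mem_exprLengths (hG.norm_mem_exprLengths a) (hG.norm_mem_exprLengths c)

theorem ldvd_of_indec {x : M} (hx : Indec x) : LDvd x Δ := by
  have hmem : x ∈ Submonoid.closure {y : M | LDvd y Δ} := hG.generates ▸ Submonoid.mem_top x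
  induction hmem using Submonoid.closure_induction with
  | mem y hy => exact hy
  | one => exact absurd rfl hx.1
  | mul a b _ _ iha ihb =>
    rcases hx.2 a b rfl with rfl | rfl
    · simpa using ihb (by simpa using hx)
    · simpa using iha (by simpa using hx)

-- a divisor of `b` is a product of at most `norm b` atoms, and there are finitely many atoms
theorem finite_ldvd (b : M) : {x : M | LDvd x b}.Finite := by
  have : Finite {x : M | Indec x} :=
    (hG.divisors_finite.subset fun _ => hG.ldvd_of_indec).to_subtype
  refine ((List.finite_length_le {x : M | Indec x} (norm b)).image
    fun l => (l.map Subtype.val).prod).subset fun x hx => ?_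
  obtain ⟨l, hl, rfl, hlen⟩ := hG.norm_mem_exprLengths x
  lift l to List {x : M | Indec x} using hl
  refine ⟨l, ?_, rfl⟩
  show l.length ≤ norm b
  rw [← List.length_map Subtype.val, hlen]
  exact hG.norm_le_norm_of_ldvd hx

theorem exists_mul_delta_eq_delta_mul (x : M) : ∃ y, x * Δ = Δ * y := by
  have hmem : x ∈ Submonoid.closure {y : M | LDvd y Δ} := hG.generates ▸ Submonoid.mem_top x
  induction hmem using Submonoid.closure_induction with
  | mem s hs =>
    obtain ⟨t, ht⟩ := hs
    obtain ⟨v, hv⟩ := (hG.divisor_iff t).2 ⟨s, ht⟩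
    exact ⟨v, by conv_lhs => rw [hv, ← mul_assoc, ← ht]⟩
  | one => exact ⟨1, by simp⟩
  | mul a b _ _ iha ihb =>
    obtain ⟨ya, hya⟩ := iha
    obtain ⟨yb, hyb⟩ := ihb
    exact ⟨ya * yb, by rw [mul_assoc, hyb, ← mul_assoc, hya, mul_assoc]⟩

theorem exists_mul_delta_pow_eq_delta_pow_mul (k : ℕ) (x : M) :
    ∃ y, x * Δ ^ k = Δ ^ k * y := by
  induction k generalizing x with
  | zero => exact ⟨x, by simp⟩
  | succ k ih =>
    obtain ⟨y, hy⟩ := hG.exists_mul_delta_eq_delta_mul x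
    obtain ⟨y', hy'⟩ := ih y
    exact ⟨y', by rw [pow_succ', ← mul_assoc, hy, mul_assoc, hy', mul_assoc]⟩

theorem exists_ldvd_delta_pow (x : M) : ∃ k : ℕ, LDvd x (Δ ^ k) := by
  have hmem : x ∈ Submonoid.closure {y : M | LDvd y Δ} := hG.generates ▸ Submonoid.mem_top x
  induction hmem using Submonoid.closure_induction with
  | mem s hs => exact ⟨1, by simpa using hs⟩
  | one => exact ⟨0, 1, by simp⟩
  | mul a b _ _ iha ihb =>
    obtain ⟨i, a', ha'⟩ := iha
    obtain ⟨j, b', hb'⟩ := ihb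
    obtain ⟨y, hy⟩ := hG.exists_mul_delta_pow_eq_delta_pow_mul j a'
    exact ⟨i + j, b' * y, by rw [pow_add, ha', mul_assoc, hy, hb', mul_assoc, mul_assoc]⟩

theorem rgcd_mul_right {a b d : M} (hd : ∀ e, RDvd e a → RDvd e b → RDvd e d) (x : M) {e : M}
    (hea : RDvd e (a * x)) (heb : RDvd e (b * x)) : RDvd e (d * x) := by
  obtain ⟨g, ⟨ra, hra⟩, ⟨rb, hrb⟩, hg⟩ := hG.exists_rgcd (a * x) (b * x)
  obtain ⟨w, rfl⟩ := hg x ⟨a, rfl⟩ ⟨b, rfl⟩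
  have hwa : RDvd w a := ⟨ra, hG.mul_right_cancel x a (ra * w) (by rw [hra, mul_assoc])⟩
  have hwb : RDvd w b := ⟨rb, hG.mul_right_cancel x b (rb * w) (by rw [hrb, mul_assoc])⟩
  obtain ⟨s, rfl⟩ := hd w hwa hwb
  obtain ⟨t, ht⟩ := hg e hea heb
  exact ⟨s * t, by rw [mul_assoc, ht, mul_assoc]⟩

end IsGarside

end Monoid

section Group

variable {M G : Type*} [Monoid M] [Group G] {ι : M →* G} {Δ : M}

def SuffixLE (ι : M →* G) (g h : G) : Prop := ∃ c : M, h = ι c * g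

theorem SuffixLE.refl (g : G) : SuffixLE ι g g := ⟨1, by simp⟩

theorem SuffixLE.trans {g h k : G} (hgh : SuffixLE ι g h) (hhk : SuffixLE ι h k) :
    SuffixLE ι g k := by
  obtain ⟨c, rfl⟩ := hgh
  obtain ⟨d, rfl⟩ := hhk
  exact ⟨d * c, by rw [map_mul, mul_assoc]⟩

theorem suffixLE_mul_right_iff {g h : G} (x : G) :
    SuffixLE ι (g * x) (h * x) ↔ SuffixLE ι g h := by
  simp only [SuffixLE, ← mul_assoc, mul_left_inj]

theorem suffixLE_map_mul_iff (hι : Function.Injective ι) (a b : M) (x : G) :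
    SuffixLE ι (ι a * x) (ι b * x) ↔ RDvd a b := by
  rw [suffixLE_mul_right_iff]
  simp only [SuffixLE, RDvd, ← map_mul, hι.eq_iff]

def IsSuffixMeet (ι : M →* G) (S : Set G) (p : G) : Prop :=
  (∀ s ∈ S, SuffixLE ι p s) ∧ ∀ e, (∀ s ∈ S, SuffixLE ι e s) → SuffixLE ι e p

theorem IsSuffixMeet.image_mul_right {S : Set G} {p : G} (hp : IsSuffixMeet ι S p) (x : G) :
    IsSuffixMeet ι ((· * x) '' S) (p * x) := by
  refine ⟨?_, fun e he => ?_⟩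
  · rintro _ ⟨s, hs, rfl⟩
    exact (suffixLE_mul_right_iff x).2 (hp.1 s hs)
  · have := hp.2 (e * x⁻¹) fun s hs => by
      simpa using (suffixLE_mul_right_iff x⁻¹).2 (he _ ⟨s, hs, rfl⟩)
    simpa using (suffixLE_mul_right_iff x).2 this

theorem map_mul_inv_pow_eq_map_mul_pow_mul_inv_pow (a : M) (k j : ℕ) :
    ι a * (ι Δ ^ k)⁻¹ = ι (a * Δ ^ j) * (ι Δ ^ (k + j))⁻¹ := by
  rw [map_mul, map_pow, pow_add]
  group

namespace IsGarside

variable (hG : IsGarside M Δ) (hfrac : IsGroupOfFractions M G ι)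
include hG hfrac

theorem eventually_exists_eq_map_mul_inv_pow (g : G) :
    ∀ᶠ k in Filter.atTop, ∃ a : M, g = ι a * (ι Δ ^ k)⁻¹ := by
  obtain ⟨a, b, rfl⟩ := hfrac.fraction g
  obtain ⟨k, b', hb'⟩ := hG.exists_ldvd_delta_pow b
  have h : ι a * (ι b)⁻¹ = ι (a * b') * (ι Δ ^ k)⁻¹ := by
    rw [← map_pow, hb', map_mul, map_mul]
    group
  refine Filter.eventually_atTop.2 ⟨k, fun K hK => ⟨a * b' * Δ ^ (K - k), ?_⟩⟩
  rw [h, map_mul_inv_pow_eq_map_mul_pow_mul_inv_pow _ k (K - k), Nat.add_sub_cancel' hK]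

-- put `g` and `h` over a common denominator `Δ ^ k` and take the right gcd of the numerators
theorem exists_isSuffixMeet_pair (g h : G) : ∃ p, IsSuffixMeet ι {g, h} p := by
  have hrep := hG.eventually_exists_eq_map_mul_inv_pow hfrac
  obtain ⟨k, ⟨a, rfl⟩, ⟨b, rfl⟩⟩ := ((hrep g).and (hrep h)).exists
  obtain ⟨d, hda, hdb, hd⟩ := hG.exists_rgcd a b
  have hle := suffixLE_map_mul_iff hfrac.injective
  refine ⟨ι d * (ι Δ ^ k)⁻¹, ?_, fun e he => ?_⟩
  · simp only [Set.forall_mem_insert, Set.mem_singleton_iff, forall_eq]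
    exact ⟨(hle _ _ _).2 hda, (hle _ _ _).2 hdb⟩
  · obtain ⟨j, hj⟩ := Filter.eventually_atTop.1 (hrep e)
    obtain ⟨c, rfl⟩ := hj (k + j) (Nat.le_add_left j k)
    simp only [Set.forall_mem_insert, Set.mem_singleton_iff, forall_eq,
      map_mul_inv_pow_eq_map_mul_pow_mul_inv_pow _ k j, hle] at he ⊢
    exact hG.rgcd_mul_right hd _ he.1 he.2

theorem exists_isSuffixMeet (s : Finset G) (hs : s.Nonempty) : ∃ p, IsSuffixMeet ι s p := by
  induction hs using Finset.Nonempty.cons_induction with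
  | singleton a => exact ⟨a, by simp [IsSuffixMeet, SuffixLE.refl]⟩
  | cons a t _ _ ih =>
    obtain ⟨p', hp'⟩ := ih
    obtain ⟨p, hp⟩ := hG.exists_isSuffixMeet_pair hfrac a p'
    simp only [IsSuffixMeet, Set.forall_mem_insert, Set.mem_singleton_iff, forall_eq] at hp
    refine ⟨p, ?_, fun e he => ?_⟩
    · simp only [Finset.coe_cons, Set.forall_mem_insert]
      exact ⟨hp.1.1, fun s hs => hp.1.2.trans (hp'.1 s hs)⟩
    · simp only [Finset.coe_cons, Set.forall_mem_insert] at he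
      exact hp.2 e ⟨he.1, hp'.2 e he.2⟩

/-- The meet `d` of `1, δ, …, δ ^ (κ - 1)` satisfies `d ≤ d * δ`: right multiplication
by `δ` permutes these elements, except that `δ ^ κ = ι a ≥ 1` replaces `1`. -/
theorem exists_conj_eq_of_pow_eq {δ : G} {κ : ℕ} {a : M} (hκ : 0 < κ) (hδ : δ ^ κ = ι a)
    (ha : ι a ∈ center G) : ∃ g : G, ∃ c : M, δ = g * ι c * g⁻¹ ∧ c ^ κ = a := by
  classical
  obtain ⟨d, hd⟩ := hG.exists_isSuffixMeet hfrac ((Finset.range κ).image (δ ^ ·))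
    ⟨1, Finset.mem_image.2 ⟨0, Finset.mem_range.2 hκ, pow_zero δ⟩⟩
  have hd_mem : ∀ i < κ, SuffixLE ι d (δ ^ i) := fun i hi =>
    hd.1 _ (Finset.mem_coe.2 (Finset.mem_image.2 ⟨i, Finset.mem_range.2 hi, rfl⟩))
  have hd_le : SuffixLE ι d (d * δ) := by
    refine (hd.image_mul_right δ).2 d ?_
    rintro _ ⟨_, hs, rfl⟩
    obtain ⟨i, hi, rfl⟩ := Finset.mem_image.1 (Finset.mem_coe.1 hs)
    show SuffixLE ι d (δ ^ i * δ)
    rw [← pow_succ]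
    obtain hi' | hi' : i + 1 < κ ∨ i + 1 = κ := by have := Finset.mem_range.1 hi; omega
    · exact hd_mem _ hi'
    · rw [hi', hδ]
      exact (hd_mem 0 hκ).trans ⟨a, by simp⟩
  obtain ⟨c, hc⟩ := hd_le
  have hιc : ι c = d * δ * d⁻¹ := by rw [hc, mul_inv_cancel_right]
  refine ⟨d⁻¹, c, by rw [hιc]; group, hfrac.injective ?_⟩
  rw [map_pow, hιc, conj_pow, hδ, mem_center_iff.1 ha d, mul_inv_cancel_right]

theorem eq_one_of_isOfFinOrder {g : G} (hg : IsOfFinOrder g) : g = 1 := by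
  obtain ⟨n, hn, hgn⟩ := isOfFinOrder_iff_pow_eq_one.1 hg
  obtain ⟨x, c, rfl, hc⟩ := hG.exists_conj_eq_of_pow_eq hfrac hn (hgn.trans ι.map_one.symm)
    (by rw [map_one]; exact (center G).one_mem)
  obtain rfl : c = 1 :=
    hG.eq_one_of_mul_eq_one (b := c ^ (n - 1)) (by rw [← pow_succ', Nat.sub_add_cancel hn, hc])
  simp

end IsGarside

end Group

end Garside

open Garside in
theorem garside_finitely_many_conjugacy_classes_of_finite_subgroups_general
    {M G : Type*} [Monoid M] [Group G] (ι : M →* G) (Δ : M)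
    (hG : IsGarside M Δ) (hfrac : IsGroupOfFractions M G ι)
    (m : ℕ) (hcentral : ∀ g : G, g * (ι Δ) ^ m = (ι Δ) ^ m * g)
    [hN : (Subgroup.zpowers ((ι Δ) ^ m)).Normal] :
    ∃ T : Finset (Subgroup (G ⧸ Subgroup.zpowers ((ι Δ) ^ m))),
      ∀ H : Subgroup (G ⧸ Subgroup.zpowers ((ι Δ) ^ m)), Finite H →
        ∃ K ∈ T, ∃ g : G ⧸ Subgroup.zpowers ((ι Δ) ^ m),
          Subgroup.map (MulAut.conj g).toMonoidHom K = H := by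
  classical
  have hz : ι Δ ^ m ∈ center G := mem_center_iff.2 hcentral
  refine ⟨(hG.finite_ldvd (Δ ^ m)).toFinset.image
    fun c => zpowers (ι c : G ⧸ zpowers (ι Δ ^ m)), fun H _ => ?_⟩
  obtain ⟨δ, κ, hκ, hδ, rfl⟩ :=
    exists_pow_eq_map_zpowers_eq_of_finite (fun _ => hG.eq_one_of_isOfFinOrder hfrac) hz H
  rw [← map_pow] at hδ hz
  obtain ⟨g, c, rfl, hc⟩ := hG.exists_conj_eq_of_pow_eq hfrac hκ hδ hz
  have hc_dvd : LDvd c (Δ ^ m) :=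
    ⟨c ^ (κ - 1), by rw [← pow_succ', Nat.sub_add_cancel hκ, hc]⟩
  refine ⟨_, Finset.mem_image_of_mem _ ((Set.Finite.mem_toFinset _).2 hc_dvd), g, ?_⟩
  simp [MonoidHom.map_zpowers]

open Garside in
/-- with `m` the least positive integer such that `Δ^m` is central in `G`
and `G_Δ = G/⟨Δ^m⟩`, the group `G_Δ` has only finitely many conjugacy classes of
finite subgroups. -/
theorem garside_finitely_many_conjugacy_classes_of_finite_subgroups
    {M G : Type*} [Monoid M] [Group G] (ι : M →* G) (Δ : M)
    (hG : IsGarside M Δ) (hfrac : IsGroupOfFractions M G ι)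
    (m : ℕ) (hm : 0 < m) (hcentral : ∀ g : G, g * (ι Δ) ^ m = (ι Δ) ^ m * g)
    (hleast : ∀ k : ℕ, 0 < k → (∀ g : G, g * (ι Δ) ^ k = (ι Δ) ^ k * g) → m ≤ k)
    [hN : (Subgroup.zpowers ((ι Δ) ^ m)).Normal] :
    ∃ T : Finset (Subgroup (G ⧸ Subgroup.zpowers ((ι Δ) ^ m))),
      ∀ H : Subgroup (G ⧸ Subgroup.zpowers ((ι Δ) ^ m)), Finite H →
        ∃ K ∈ T, ∃ g : G ⧸ Subgroup.zpowers ((ι Δ) ^ m),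
          Subgroup.map (MulAut.conj g).toMonoidHom K = H :=
  garside_finitely_many_conjugacy_classes_of_finite_subgroups_general ι Δ hG hfrac m hcentral
    (hN := hN)
end

section
/- Let M be a Garside monoid with Garside element Δ and simple divisors D, and let G be its group of fractions. Suppose Δ is tame with constant c, i.e., ‖Δⁿ‖ ≤ c·n for all n ≥ 0. Then for every g ∈ G, if g = a·Δ^j with a ∈ M not left-divisible by Δ and j ∈ ℤ, the word length of g with respect to the generating set D satisfies |g|_D ≥ (1/c)·‖a‖, i.e., ‖a‖ ≤ c·|g|_D. -/
namespace Garside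

/-- Word length of `g` with respect to a generating set `S`: the least `n` such that
`g` is a product of `n` elements of `S ∪ S⁻¹`. -/
noncomputable def wordLength {G : Type*} [Group G] (S : Set G) (g : G) : ℕ :=
  sInf {n | ∃ l : List G, (∀ x ∈ l, x ∈ S ∨ x⁻¹ ∈ S) ∧ l.prod = g ∧ l.length = n}

end Garside


/-!
Take a geodesic word for `g`, of length `n`, in the letters `D ∪ D⁻¹`. The element `Δ` is
quasi-central (`m Δ = Δ m'` for every `m`), so an inverse letter `s⁻¹` equals `t Δ⁻¹` where
`s t = Δ`, and all the `Δ⁻¹` can be pushed to the right: `g Δᵏ = m` for some `k` and some left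
divisor `m` of `Δⁿ`. Hence `a Δ^(j+k) = m`. If `j + k < 0` then `Δ` left-divides `a`, which is
excluded; so `a` left-divides `m`, and `‖a‖ ≤ ‖m‖ ≤ ‖Δⁿ‖ ≤ c n`.
-/

namespace Garside

section Monoid

variable {M : Type*} [Monoid M] {Δ : M}

theorem norm_mem_exprLengths (hG : IsGarside M Δ) (m : M) : norm m ∈ exprLengths m :=
  Nat.sSup_mem (hG.expr_nonempty m) (hG.expr_bdd m)

theorem norm_add_norm_le_norm_mul (hG : IsGarside M Δ) (a b : M) :
    norm a + norm b ≤ norm (a * b) := by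
  obtain ⟨la, hla, hpa, hna⟩ := norm_mem_exprLengths hG a
  obtain ⟨lb, hlb, hpb, hnb⟩ := norm_mem_exprLengths hG b
  refine le_csSup (hG.expr_bdd _) ⟨la ++ lb, fun x hx => ?_, by simp [hpa, hpb],
    by simp [hna, hnb]⟩
  rcases List.mem_append.1 hx with h | h
  exacts [hla x h, hlb x h]

theorem norm_le_norm_of_ldvd (hG : IsGarside M Δ) {a b : M} (h : LDvd a b) :
    norm a ≤ norm b := by
  obtain ⟨u, rfl⟩ := h
  exact (Nat.le_add_right _ _).trans (norm_add_norm_le_norm_mul hG a u)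

theorem exists_mul_delta_eq (hG : IsGarside M Δ) (m : M) : ∃ m', m * Δ = Δ * m' := by
  have hm : m ∈ Submonoid.closure {x : M | LDvd x Δ} := hG.generates ▸ Submonoid.mem_top m
  induction hm using Submonoid.closure_induction with
  | mem s hs =>
    obtain ⟨t, ht⟩ := hs
    obtain ⟨u, hu⟩ := (hG.divisor_iff t).2 ⟨s, ht⟩
    exact ⟨u, by conv_lhs => rw [hu, ← mul_assoc, ← ht]⟩
  | one => exact ⟨1, by simp⟩
  | mul x y _ _ hx hy =>
    obtain ⟨x', hx'⟩ := hx
    obtain ⟨y', hy'⟩ := hy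
    exact ⟨x' * y', by rw [mul_assoc, hy', ← mul_assoc, hx', mul_assoc]⟩

theorem exists_mul_delta_pow_eq (hG : IsGarside M Δ) (m : M) (n : ℕ) :
    ∃ m', m * Δ ^ n = Δ ^ n * m' := by
  induction n generalizing m with
  | zero => exact ⟨m, by simp⟩
  | succ n ih =>
    obtain ⟨m₁, h₁⟩ := exists_mul_delta_eq hG m
    obtain ⟨m₂, h₂⟩ := ih m₁
    exact ⟨m₂, by rw [pow_succ', ← mul_assoc, h₁, mul_assoc, h₂, ← mul_assoc]⟩

theorem ldvd_delta_mul_delta_pow_succ (hG : IsGarside M Δ) (m : M) (p : ℕ) :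
    LDvd Δ (m * Δ ^ (p + 1)) := by
  obtain ⟨w, hw⟩ := exists_mul_delta_eq hG (m * Δ ^ p)
  exact ⟨w, by rw [pow_succ, ← mul_assoc, hw]⟩

theorem exists_mul_delta_pow_eq_of_ldvd (hG : IsGarside M Δ) {m : M} {n : ℕ}
    (hm : LDvd m (Δ ^ n)) (p : ℕ) : ∃ m', m * Δ ^ p = Δ ^ p * m' ∧ LDvd m' (Δ ^ n) := by
  obtain ⟨m', hm'⟩ := exists_mul_delta_pow_eq hG m p
  obtain ⟨u, hu⟩ := hm
  obtain ⟨u', hu'⟩ := exists_mul_delta_pow_eq hG u p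
  refine ⟨m', hm', u', hG.mul_left_cancel (Δ ^ p) _ _ ?_⟩
  calc Δ ^ p * Δ ^ n = Δ ^ n * Δ ^ p := by rw [← pow_add, ← pow_add, add_comm]
    _ = m * Δ ^ p * u' := by rw [hu, mul_assoc, hu', mul_assoc]
    _ = Δ ^ p * (m' * u') := by rw [hm', mul_assoc]

theorem ldvd_delta_pow_add_of_ldvd (hG : IsGarside M Δ) {s m : M} {p q : ℕ}
    (hs : LDvd s (Δ ^ p)) (hm : LDvd m (Δ ^ q)) : LDvd (s * m) (Δ ^ (p + q)) := by
  obtain ⟨u, hu⟩ := hs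
  obtain ⟨v, hv⟩ := hm
  obtain ⟨u', hu'⟩ := exists_mul_delta_pow_eq hG u q
  exact ⟨v * u', by rw [pow_add, hu, mul_assoc, hu', hv]; simp only [mul_assoc]⟩

end Monoid

section Group

variable {G : Type*} [Group G]

theorem exists_word_length_eq_wordLength {S : Set G} {g : G} (hg : g ∈ Subgroup.closure S) :
    ∃ l : List G, (∀ x ∈ l, x ∈ S ∨ x⁻¹ ∈ S) ∧ l.prod = g ∧ l.length = wordLength S g := by
  rw [← Subgroup.mem_toSubmonoid, Subgroup.closure_toSubmonoid] at hg
  obtain ⟨l, hl, hprod⟩ := Submonoid.exists_list_of_mem_closure hg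
  exact Nat.sInf_mem (s := {n | ∃ l : List G, (∀ x ∈ l, x ∈ S ∨ x⁻¹ ∈ S) ∧ l.prod = g ∧
    l.length = n}) ⟨_, l, hl, hprod, rfl⟩

variable {M : Type*} [Monoid M] {ι : M →* G} {Δ : M}

theorem closure_image_simpleDivs_eq_top (hG : IsGarside M Δ) (hfrac : IsGroupOfFractions M G ι) :
    Subgroup.closure (ι '' SimpleDivs Δ) = ⊤ := by
  have hι : ∀ m, ι m ∈ Subgroup.closure (ι '' SimpleDivs Δ) := fun m =>
    Subgroup.le_closure_toSubmonoid _ <| MonoidHom.map_mclosure ι (SimpleDivs Δ) ▸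
      Submonoid.mem_map_of_mem ι (hG.generates ▸ Submonoid.mem_top m)
  refine (Subgroup.eq_top_iff' _).2 fun g => ?_
  obtain ⟨a, b, rfl⟩ := hfrac.fraction g
  exact mul_mem (hι a) (inv_mem (hι b))

theorem exists_mul_delta_pow_eq_of_mem (hG : IsGarside M Δ) {x : G}
    (hx : x ∈ ι '' SimpleDivs Δ ∨ x⁻¹ ∈ ι '' SimpleDivs Δ) :
    ∃ (s : M) (e : ℕ), LDvd s Δ ∧ x * ι Δ ^ e = ι s := by
  rcases hx with ⟨s, hs, rfl⟩ | ⟨s, ⟨t, ht⟩, hx⟩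
  · exact ⟨s, 0, hs, by rw [pow_zero, mul_one]⟩
  · refine ⟨t, 1, (hG.divisor_iff t).2 ⟨s, ht⟩, ?_⟩
    rw [pow_one, ht, map_mul, ← mul_assoc, hx, mul_inv_cancel, one_mul]

theorem exists_ldvd_delta_pow_of_word (hG : IsGarside M Δ) (l : List G)
    (hl : ∀ x ∈ l, x ∈ ι '' SimpleDivs Δ ∨ x⁻¹ ∈ ι '' SimpleDivs Δ) :
    ∃ (m : M) (k : ℕ), LDvd m (Δ ^ l.length) ∧ l.prod * ι Δ ^ k = ι m := by
  induction l with
  | nil => exact ⟨1, 0, ⟨1, by simp⟩, by simp⟩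
  | cons x l ih =>
    obtain ⟨m, k, hm, hprod⟩ := ih fun y hy => hl y (List.mem_cons_of_mem x hy)
    obtain ⟨s, e, hs, hx⟩ := exists_mul_delta_pow_eq_of_mem hG (hl x List.mem_cons_self)
    obtain ⟨m', hmm', hm'⟩ := exists_mul_delta_pow_eq_of_ldvd hG hm e
    refine ⟨s * m', k + e, ?_, ?_⟩
    · rw [List.length_cons, add_comm]
      exact ldvd_delta_pow_add_of_ldvd hG (by rwa [pow_one]) hm'
    · calc (x :: l).prod * ι Δ ^ (k + e) = x * (l.prod * ι Δ ^ k) * ι Δ ^ e := by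
            simp only [List.prod_cons, pow_add, mul_assoc]
        _ = x * ι Δ ^ e * ι m' := by
            rw [hprod, mul_assoc, ← map_pow, ← map_mul, hmm', map_mul, map_pow, mul_assoc]
        _ = ι (s * m') := by rw [hx, map_mul]

theorem ldvd_of_map_mul_zpow_eq (hG : IsGarside M Δ) (hι : Function.Injective ι) {a m : M}
    {z : ℤ} (ha : ¬ LDvd Δ a) (h : ι a * ι Δ ^ z = ι m) : LDvd a m := by
  rcases z with p | p
  · rw [Int.ofNat_eq_natCast, zpow_natCast, ← map_pow, ← map_mul] at h
    exact ⟨Δ ^ p, (hι h).symm⟩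
  · rw [zpow_negSucc, mul_inv_eq_iff_eq_mul, ← map_pow, ← map_mul] at h
    exact absurd (hι h ▸ ldvd_delta_mul_delta_pow_succ hG m p) ha

end Group

end Garside

open Garside in
/-- if `Δ` is tame with constant `c` (`‖Δⁿ‖ ≤ c·n` for all `n`), then for
`g = a·Δʲ` with `a ∈ M` not left-divisible by `Δ` and `j ∈ ℤ`, we have
`‖a‖ ≤ c·|g|_D`, where `|·|_D` is the word length with respect to the simple divisors. -/
theorem garside_tame_wordLength_bound
    {M G : Type*} [Monoid M] [Group G] (ι : M →* G) (Δ : M)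
    (hG : IsGarside M Δ) (hfrac : IsGroupOfFractions M G ι)
    (c : ℝ) (htame : ∀ n : ℕ, (norm (Δ ^ n) : ℝ) ≤ c * n)
    (g : G) (a : M) (j : ℤ) (ha : ¬ LDvd Δ a) (hrep : g = ι a * (ι Δ) ^ j) :
    (norm a : ℝ) ≤ c * wordLength (ι '' SimpleDivs Δ) g := by
  obtain ⟨l, hl, hprod, hlen⟩ := exists_word_length_eq_wordLength
    (closure_image_simpleDivs_eq_top hG hfrac ▸ Subgroup.mem_top g)
  obtain ⟨m, k, hm, hmk⟩ := exists_ldvd_delta_pow_of_word hG l hl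
  have ham : LDvd a m := ldvd_of_map_mul_zpow_eq hG hfrac.injective ha (z := j + k) <| by
    rw [zpow_add, ← mul_assoc, ← hrep, ← hprod, zpow_natCast, hmk]
  calc (norm a : ℝ) ≤ norm (Δ ^ l.length) := by
        exact_mod_cast (norm_le_norm_of_ldvd hG ham).trans (norm_le_norm_of_ldvd hG hm)
    _ ≤ c * l.length := htame _
    _ = c * wordLength (ι '' SimpleDivs Δ) g := by rw [hlen]
end

section
/- Let M be a Garside monoid with Garside element Δ and simple divisors D. For a ∈ D let ^*a ∈ D denote the left complement of a, i.e., the unique element with ^*a·a = Δ, and for g ∈ M let LF(g) denote the left gcd of g and Δ. Then for all a, b ∈ D: if LF(^*a·b) = ^*a (i.e., the word ^*a·b is in left greedy normal form), then LF(^*b·a) = ^*b (i.e., ^*b·a is also in left greedy normal form). -/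
namespace Garside

/-- `d` is a left gcd of `a` and `b`: it left-divides both, and every common
left divisor of `a` and `b` left-divides `d`. -/
def IsLGcd {M : Type*} [Monoid M] (d a b : M) : Prop :=
  LDvd d a ∧ LDvd d b ∧ ∀ e, LDvd e a → LDvd e b → LDvd e d

/-- `d` is a right gcd of `a` and `b`. -/
def IsRGcd {M : Type*} [Monoid M] (d a b : M) : Prop :=
  RDvd d a ∧ RDvd d b ∧ ∀ e, RDvd e a → RDvd e b → RDvd e d

end Garside

/-!
`LF(^*a·b) = ^*a` holds exactly when `a` and `b` have no nontrivial common left divisor,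
a condition symmetric in `a` and `b`. A common left divisor `t` of `a` and `b` makes `^*a·t` a
common left divisor of `^*a·b` and `Δ`, so `t` is invertible, hence trivial in an atomic
monoid. Conversely, if `e` left-divides both `^*a·b` and `Δ = ^*a·a`, then the left lcm of `e`
and `^*a` has the form `^*a·t` with `t` a common left divisor of `a` and `b`, so `t = 1` and
`e` left-divides `^*a`.
-/

namespace Garside

variable {M : Type*} [Monoid M]

theorem add_mem_exprLengths_mul {a b : M} {n m : ℕ} (hn : n ∈ exprLengths a)
    (hm : m ∈ exprLengths b) : n + m ∈ exprLengths (a * b) := by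
  obtain ⟨l, hl, rfl, rfl⟩ := hn
  obtain ⟨l', hl', rfl, rfl⟩ := hm
  exact ⟨l ++ l', List.forall_mem_append.2 ⟨hl, hl'⟩, List.prod_append, List.length_append⟩

theorem mul_mem_exprLengths_one {n : ℕ} (hn : n ∈ exprLengths (1 : M)) (k : ℕ) :
    k * n ∈ exprLengths (1 : M) := by
  induction k with
  | zero => exact ⟨[], by simp, rfl, (zero_mul n).symm⟩
  | succ k ih => simpa [Nat.succ_mul] using add_mem_exprLengths_mul ih hn

theorem eq_zero_of_mem_exprLengths_one (hbdd : BddAbove (exprLengths (1 : M))) {n : ℕ}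
    (hn : n ∈ exprLengths (1 : M)) : n = 0 := by
  obtain ⟨B, hB⟩ := hbdd
  have hle := hB (mul_mem_exprLengths_one hn (B + 1))
  by_contra hne
  have := Nat.le_mul_of_pos_right (B + 1) (Nat.pos_of_ne_zero hne)
  omega

theorem eq_one_of_mul_eq_one (hatomic : ∀ m : M, (exprLengths m).Nonempty)
    (hbdd : BddAbove (exprLengths (1 : M))) {t v : M} (h : t * v = 1) : t = 1 := by
  obtain ⟨n, l, hl, rfl, rfl⟩ := hatomic t
  obtain ⟨m, hm⟩ := hatomic v
  have hlen : l.length + m = 0 :=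
    eq_zero_of_mem_exprLengths_one hbdd (h ▸ add_mem_exprLengths_mul ⟨l, hl, rfl, rfl⟩ hm)
  rw [List.length_eq_zero_iff.1 (by omega : l.length = 0), List.prod_nil]

theorem LDvd.mul_left {t a : M} (h : LDvd t a) (c : M) : LDvd (c * t) (c * a) := by
  obtain ⟨u, rfl⟩ := h
  exact ⟨u, (mul_assoc c t u).symm⟩

theorem LDvd.of_mul_left {c t a : M} (hcancel : ∀ b d : M, c * b = c * d → b = d)
    (h : LDvd (c * t) (c * a)) : LDvd t a := by
  obtain ⟨u, hu⟩ := h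
  exact ⟨u, hcancel _ _ (by rw [hu, mul_assoc])⟩

def LCoprime (a b : M) : Prop := ∀ t, LDvd t a → LDvd t b → t = 1

theorem LCoprime.symm {a b : M} (h : LCoprime a b) : LCoprime b a :=
  fun t hb ha => h t ha hb

theorem isLGcd_complement_mul_iff {Δ la a b : M} (hG : IsGarside M Δ) (hla : la * a = Δ) :
    IsLGcd la (la * b) Δ ↔ LCoprime a b := by
  constructor
  · rintro ⟨-, -, hmax⟩ t hta htb
    obtain ⟨v, hv⟩ := hmax (la * t) (htb.mul_left la) (hla ▸ hta.mul_left la)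
    exact eq_one_of_mul_eq_one hG.expr_nonempty (hG.expr_bdd 1)
      (hG.mul_left_cancel la _ _ (by rw [← mul_assoc, ← hv, mul_one]))
  · intro hab
    refine ⟨⟨b, rfl⟩, ⟨a, hla.symm⟩, fun e heb heΔ => ?_⟩
    obtain ⟨f, hef, ⟨t, rfl⟩, hmin⟩ := hG.exists_llcm e la
    have hta : LDvd t a :=
      (hmin _ (by rwa [hla]) ⟨a, rfl⟩).of_mul_left (hG.mul_left_cancel la)
    have htb : LDvd t b := (hmin _ heb ⟨b, rfl⟩).of_mul_left (hG.mul_left_cancel la)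
    rwa [hab t hta htb, mul_one] at hef

end Garside

open Garside in
theorem garside_normal_form_symmetric_general
    {M : Type*} [Monoid M] (Δ : M) (hG : IsGarside M Δ)
    (a b la lb : M)
    (hla : la * a = Δ) (hlb : lb * b = Δ)
    (h : IsLGcd la (la * b) Δ) :
    IsLGcd lb (lb * a) Δ :=
  (isLGcd_complement_mul_iff hG hlb).2 ((isLGcd_complement_mul_iff hG hla).1 h).symm

open Garside in
/-- for simple divisors `a, b` with left complements `^*a, ^*b`
(so `^*a·a = Δ = ^*b·b`), if `LF(^*a·b) = ^*a` (i.e. `^*a·b` is in left greedy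
normal form), then `LF(^*b·a) = ^*b`. -/
theorem garside_normal_form_symmetric
    {M : Type*} [Monoid M] (Δ : M) (hG : IsGarside M Δ)
    (a b la lb : M) (ha : a ∈ SimpleDivs Δ) (hb : b ∈ SimpleDivs Δ)
    (hla : la * a = Δ) (hlb : lb * b = Δ)
    (h : IsLGcd la (la * b) Δ) :
    IsLGcd lb (lb * a) Δ :=
  garside_normal_form_symmetric_general Δ hG a b la lb hla hlb h
end

section
/- Let M be a Garside monoid with Garside element Δ and simple divisors D, and for g ∈ M let LF(g) denote the left gcd of g and Δ. Then every g ∈ M with g ≠ 1 may be represented uniquely as a product of simple divisors g = μ₁·μ₂⋯μₙ with each μᵢ ∈ D∖{1} and μᵢ = LF(μᵢ·μᵢ₊₁⋯μₙ) for each 1 ≤ i ≤ n (the left greedy normal form of g). -/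
namespace Garside

structure IsAtomicMonoid (M : Type*) [Monoid M] : Prop where
  expr_nonempty : ∀ m : M, (exprLengths m).Nonempty
  expr_bdd : ∀ m : M, BddAbove (exprLengths m)

variable {M : Type*} [Monoid M]

namespace IsAtomicMonoid

lemma norm_mem (hM : IsAtomicMonoid M) (m : M) : norm m ∈ exprLengths m :=
  Nat.sSup_mem (hM.expr_nonempty m) (hM.expr_bdd m)

lemma le_norm (hM : IsAtomicMonoid M) {m : M} {n : ℕ} (h : n ∈ exprLengths m) : n ≤ norm m :=
  le_csSup (hM.expr_bdd m) h

lemma norm_add_norm_le_norm_mul (hM : IsAtomicMonoid M) (a b : M) :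
    norm a + norm b ≤ norm (a * b) := by
  obtain ⟨la, hla, rfl, hna⟩ := hM.norm_mem a
  obtain ⟨lb, hlb, rfl, hnb⟩ := hM.norm_mem b
  refine hM.le_norm ⟨la ++ lb, ?_, List.prod_append, ?_⟩
  · simpa only [List.mem_append, or_imp, forall_and] using ⟨hla, hlb⟩
  · rw [List.length_append, hna, hnb]

lemma norm_pos (hM : IsAtomicMonoid M) {m : M} (hm : m ≠ 1) : 0 < norm m := by
  obtain ⟨n, l, hl, rfl, rfl⟩ := hM.expr_nonempty m
  refine lt_of_lt_of_le ?_ (hM.le_norm ⟨l, hl, rfl, rfl⟩)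
  exact List.length_pos_iff.2 fun h => hm (by rw [h, List.prod_nil])

lemma eq_one_of_mul_eq_one_right (hM : IsAtomicMonoid M) {a b : M} (h : a * b = 1) : a = 1 := by
  by_contra ha
  have hbab : norm (b * a) + norm b ≤ norm b := by
    simpa only [mul_assoc, h, mul_one] using hM.norm_add_norm_le_norm_mul (b * a) b
  have hba := hM.norm_add_norm_le_norm_mul b a
  have := hM.norm_pos ha
  omega

lemma ldvd_antisymm (hM : IsAtomicMonoid M) (hcancel : ∀ a b c : M, a * b = a * c → b = c)
    {a b : M} (hab : LDvd a b) (hba : LDvd b a) : a = b := by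
  obtain ⟨c, rfl⟩ := hab
  obtain ⟨c', hc'⟩ := hba
  have hcc' : c * c' = 1 := hcancel a _ _ (by rw [← mul_assoc, ← hc', mul_one])
  rw [hM.eq_one_of_mul_eq_one_right hcc', mul_one]

end IsAtomicMonoid

def IsLeftGreedyNF (Δ g : M) (l : List M) : Prop :=
  (∀ μ ∈ l, μ ∈ SimpleDivs Δ ∧ μ ≠ 1) ∧
  l.prod = g ∧
  ∀ i : Fin l.length, IsLGcd (l.get i) ((l.drop i).prod) Δ

lemma isLeftGreedyNF_nil {Δ g : M} : IsLeftGreedyNF Δ g [] ↔ g = 1 := by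
  simp [IsLeftGreedyNF, eq_comm]

lemma isLeftGreedyNF_cons {Δ g μ : M} {t : List M} :
    IsLeftGreedyNF Δ g (μ :: t) ↔
      μ * t.prod = g ∧ μ ≠ 1 ∧ IsLGcd μ g Δ ∧ IsLeftGreedyNF Δ t.prod t := by
  simp only [IsLeftGreedyNF, List.forall_mem_cons, List.length_cons, Fin.forall_fin_succ,
    List.get_eq_getElem, Fin.coe_ofNat_eq_mod, Nat.zero_mod, List.getElem_cons_zero,
    List.drop_zero, List.prod_cons, Fin.val_succ, List.getElem_cons_succ, List.drop_succ_cons]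
  constructor
  · rintro ⟨⟨⟨-, hμ1⟩, ht⟩, rfl, hμ, hgcd⟩
    exact ⟨rfl, hμ1, hμ, ht, trivial, hgcd⟩
  · rintro ⟨rfl, hμ1, hμ, ht, -, hgcd⟩
    exact ⟨⟨⟨hμ.2.1, hμ1⟩, ht⟩, rfl, hμ, hgcd⟩

namespace IsGarside

variable {Δ : M}

lemma isAtomicMonoid (hG : IsGarside M Δ) : IsAtomicMonoid M :=
  ⟨hG.expr_nonempty, hG.expr_bdd⟩

lemma isLGcd_unique (hG : IsGarside M Δ) {d d' a b : M} (h : IsLGcd d a b)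
    (h' : IsLGcd d' a b) : d = d' :=
  hG.isAtomicMonoid.ldvd_antisymm hG.mul_left_cancel (h'.2.2 d h.1 h.2.1) (h.2.2 d' h'.1 h'.2.1)

lemma exists_ne_one_mem_simpleDivs_ldvd (hG : IsGarside M Δ) {g : M} (hg : g ≠ 1) :
    ∃ s ∈ SimpleDivs Δ, s ≠ 1 ∧ LDvd s g := by
  have key : ∀ g ∈ Submonoid.closure (SimpleDivs Δ),
      g = 1 ∨ ∃ s ∈ SimpleDivs Δ, s ≠ 1 ∧ LDvd s g := by
    intro g hg
    induction hg using Submonoid.closure_induction with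
    | mem x hx =>
      exact or_iff_not_imp_left.2 fun hx1 => ⟨x, hx, hx1, 1, (mul_one x).symm⟩
    | one => exact .inl rfl
    | mul x y _ _ hx hy =>
      rcases hx with rfl | ⟨s, hs, hs1, c, rfl⟩
      · rwa [one_mul]
      · exact .inr ⟨s, hs, hs1, c * y, mul_assoc s c y⟩
  exact (key g (hG.generates ▸ Submonoid.mem_top g)).resolve_left hg

lemma isLGcd_ne_one (hG : IsGarside M Δ) {d g : M} (hg : g ≠ 1) (hd : IsLGcd d g Δ) :
    d ≠ 1 := by
  rintro rfl
  obtain ⟨s, hs, hs1, hsg⟩ := hG.exists_ne_one_mem_simpleDivs_ldvd hg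
  obtain ⟨c, hc⟩ := hd.2.2 s hsg hs
  exact hs1 (hG.isAtomicMonoid.eq_one_of_mul_eq_one_right hc.symm)

lemma eq_nil_of_isLeftGreedyNF_one (hG : IsGarside M Δ) {l : List M}
    (h : IsLeftGreedyNF Δ 1 l) : l = [] := by
  cases l with
  | nil => rfl
  | cons μ t =>
    obtain ⟨hprod, hμ1, -⟩ := isLeftGreedyNF_cons.1 h
    exact absurd (hG.isAtomicMonoid.eq_one_of_mul_eq_one_right hprod) hμ1

theorem exists_isLeftGreedyNF (hG : IsGarside M Δ) (g : M) : ∃ l, IsLeftGreedyNF Δ g l := by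
  induction hn : norm g using Nat.strong_induction_on generalizing g with
  | _ n ih =>
    by_cases hg : g = 1
    · exact ⟨[], isLeftGreedyNF_nil.2 hg⟩
    obtain ⟨d, hd⟩ := hG.exists_lgcd g Δ
    have hd1 : d ≠ 1 := hG.isLGcd_ne_one hg hd
    obtain ⟨g', rfl⟩ := hd.1
    have hg' : norm g' < n := by
      have := hG.isAtomicMonoid.norm_add_norm_le_norm_mul d g'
      have := hG.isAtomicMonoid.norm_pos hd1
      omega
    obtain ⟨l, hl⟩ := ih _ hg' g' rfl
    obtain rfl : l.prod = g' := hl.2.1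
    exact ⟨d :: l, isLeftGreedyNF_cons.2 ⟨rfl, hd1, hd, hl⟩⟩

theorem isLeftGreedyNF_unique (hG : IsGarside M Δ) {g : M} {l₁ l₂ : List M}
    (h₁ : IsLeftGreedyNF Δ g l₁) (h₂ : IsLeftGreedyNF Δ g l₂) : l₁ = l₂ := by
  induction l₁ generalizing g l₂ with
  | nil =>
    obtain rfl := isLeftGreedyNF_nil.1 h₁
    exact (hG.eq_nil_of_isLeftGreedyNF_one h₂).symm
  | cons μ t ih =>
    cases l₂ with
    | nil =>
      obtain rfl := isLeftGreedyNF_nil.1 h₂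
      exact hG.eq_nil_of_isLeftGreedyNF_one h₁
    | cons ν t₂ =>
      obtain ⟨hμ, -, hμg, ht⟩ := isLeftGreedyNF_cons.1 h₁
      obtain ⟨hν, -, hνg, ht₂⟩ := isLeftGreedyNF_cons.1 h₂
      obtain rfl := hG.isLGcd_unique hμg hνg
      have hprod : t.prod = t₂.prod := hG.mul_left_cancel μ _ _ (hμ.trans hν.symm)
      rw [ih ht (hprod ▸ ht₂)]

end IsGarside

end Garside

open Garside in
theorem garside_left_greedy_normal_form_general
    {M : Type*} [Monoid M] (Δ : M) (hG : IsGarside M Δ)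
    (g : M) :
    ∃! l : List M,
      (∀ μ ∈ l, μ ∈ SimpleDivs Δ ∧ μ ≠ 1) ∧
      l.prod = g ∧
      ∀ i : Fin l.length, IsLGcd (l.get i) ((l.drop i).prod) Δ := by
  obtain ⟨l, hl⟩ := hG.exists_isLeftGreedyNF g
  exact ⟨l, hl, fun l' hl' => hG.isLeftGreedyNF_unique hl' hl⟩

open Garside in
/-- every `g ≠ 1` has a unique left greedy normal form: a unique list
`μ₁, …, μₙ` of simple divisors `≠ 1` with product `g` such that each `μᵢ` is the
left gcd of `Δ` and the remaining suffix product `μᵢ·μᵢ₊₁⋯μₙ`. -/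
theorem garside_left_greedy_normal_form
    {M : Type*} [Monoid M] (Δ : M) (hG : IsGarside M Δ)
    (g : M) (hg : g ≠ 1) :
    ∃! l : List M,
      (∀ μ ∈ l, μ ∈ SimpleDivs Δ ∧ μ ≠ 1) ∧
      l.prod = g ∧
      ∀ i : Fin l.length, IsLGcd (l.get i) ((l.drop i).prod) Δ :=
  garside_left_greedy_normal_form_general Δ hG g
end

section
/- Let M be a Garside monoid with Garside element Δ and simple divisors D. Then there is a bijection σ : D → D such that Δ·μ = σ(μ)·Δ for all μ ∈ D; consequently there exists a positive integer m such that Δ^m is central in M. Moreover σ preserves the norm: if μ ∈ D can be expressed as a product of n atoms, then so can σ(μ); in particular ‖σ(μ)‖ = ‖μ‖ for all μ ∈ D. -/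
/-!
Since left and right divisors of `Δ` coincide, a simple `μ` satisfies `Δ = c μ` and
`Δ = d c` for simples `c, d`, whence `Δ μ = d c μ = d Δ`; symmetrically `μ Δ = Δ μ'`.
As the simples generate `M`, this gives `Δ M = M Δ`, and by cancellation `x ↦ Δ x Δ⁻¹` is a
well-defined automorphism `φ` of `M` fixing `Δ`. An automorphism maps atoms to atoms, hence
preserves expression lengths and the norm, and it permutes the divisors of `φ Δ = Δ`. Finally
`φ` permutes the finite generating set of simples, so some `φ ^ m` fixes every simple and
hence all of `M`, which says exactly that `Δ ^ m` is central.
-/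

namespace Garside

variable {M N : Type*} [Monoid M] [Monoid N]

theorem Indec.map (e : M ≃* N) {x : M} (hx : Indec x) : Indec (e x) := by
  refine ⟨fun h => hx.1 (e.map_eq_one_iff.mp h), fun a b hab => ?_⟩
  have hx_eq : x = e.symm a * e.symm b := by rw [← map_mul, ← hab, e.symm_apply_apply]
  exact (hx.2 _ _ hx_eq).imp e.symm.map_eq_one_iff.mp e.symm.map_eq_one_iff.mp

theorem exprLengths_subset_map (e : M ≃* N) (x : M) : exprLengths x ⊆ exprLengths (e x) := by
  rintro n ⟨l, hl, rfl, rfl⟩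
  refine ⟨l.map e, ?_, (map_list_prod e l).symm, l.length_map _⟩
  simp only [List.forall_mem_map]
  exact fun y hy => (hl y hy).map e

theorem exprLengths_map (e : M ≃* N) (x : M) : exprLengths (e x) = exprLengths x :=
  subset_antisymm (by simpa using exprLengths_subset_map e.symm (e x))
    (exprLengths_subset_map e x)

theorem norm_map (e : M ≃* N) (x : M) : norm (e x) = norm x :=
  congrArg sSup (exprLengths_map e x)

structure IsQuasiCentral (Δ : M) : Prop where
  exists_mul_left_eq : ∀ x, ∃ y, Δ * x = y * Δ
  exists_mul_right_eq : ∀ x, ∃ y, x * Δ = Δ * y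

theorem isQuasiCentral_of_ldvd_iff_rdvd {Δ : M} (hΔ : ∀ x, LDvd x Δ ↔ RDvd x Δ)
    (hgen : Submonoid.closure (SimpleDivs Δ) = ⊤) : IsQuasiCentral Δ where
  exists_mul_left_eq := by
    refine Submonoid.dense_induction _ hgen (fun μ hμ => ?_) ⟨1, by simp⟩ ?_
    · obtain ⟨c, hc⟩ := (hΔ μ).mp hμ
      obtain ⟨d, hd⟩ := (hΔ c).mp ⟨μ, hc⟩
      exact ⟨d, by nth_rewrite 1 [hd]; rw [mul_assoc, ← hc]⟩
    · rintro x y ⟨a, ha⟩ ⟨b, hb⟩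
      exact ⟨a * b, by rw [← mul_assoc, ha, mul_assoc, hb, mul_assoc]⟩
  exists_mul_right_eq := by
    refine Submonoid.dense_induction _ hgen (fun μ hμ => ?_) ⟨1, by simp⟩ ?_
    · obtain ⟨c, hc⟩ := hμ
      obtain ⟨d, hd⟩ := (hΔ c).mpr ⟨μ, hc⟩
      exact ⟨d, by nth_rewrite 1 [hd]; rw [← mul_assoc, ← hc]⟩
    · rintro x y ⟨a, ha⟩ ⟨b, hb⟩
      exact ⟨a * b, by rw [mul_assoc, hb, ← mul_assoc, ha, mul_assoc]⟩

theorem IsGarside.isCancelMul {Δ : M} (hG : IsGarside M Δ) : IsCancelMul M where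
  mul_left_cancel a b c := hG.mul_left_cancel a b c
  mul_right_cancel a b c := hG.mul_right_cancel a b c

namespace IsQuasiCentral

variable [IsCancelMul M] {Δ : M} (h : IsQuasiCentral Δ)

noncomputable def conj : M ≃* M where
  toFun x := (h.exists_mul_left_eq x).choose
  invFun x := (h.exists_mul_right_eq x).choose
  left_inv x := mul_left_cancel <|
    ((h.exists_mul_right_eq _).choose_spec.symm.trans (h.exists_mul_left_eq x).choose_spec.symm)
  right_inv x := mul_right_cancel <|
    ((h.exists_mul_left_eq _).choose_spec.symm.trans (h.exists_mul_right_eq x).choose_spec.symm)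
  map_mul' x y := by
    have hx := (h.exists_mul_left_eq x).choose_spec
    have hy := (h.exists_mul_left_eq y).choose_spec
    have hxy := (h.exists_mul_left_eq (x * y)).choose_spec
    refine mul_right_cancel (b := Δ) ?_
    calc _ = Δ * x * y := hxy.symm.trans (mul_assoc _ _ _).symm
      _ = _ * (Δ * y) := (congrArg (· * y) hx).trans (mul_assoc _ _ _)
      _ = _ := (congrArg (_ * ·) hy).trans (mul_assoc _ _ _).symm

theorem mul_conj (x : M) : Δ * x = h.conj x * Δ :=
  (h.exists_mul_left_eq x).choose_spec

theorem conj_self : h.conj Δ = Δ :=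
  mul_right_cancel (h.mul_conj Δ).symm

theorem conj_mem_simpleDivs_iff (x : M) : h.conj x ∈ SimpleDivs Δ ↔ x ∈ SimpleDivs Δ := by
  have hdvd := map_dvd_iff h.conj (a := x) (b := Δ)
  rwa [h.conj_self] at hdvd

theorem pow_mul_conj_iterate (n : ℕ) (x : M) : Δ ^ n * x = h.conj^[n] x * Δ ^ n := by
  induction n generalizing x with
  | zero => simp
  | succ n ih =>
    rw [pow_succ, mul_assoc, h.mul_conj, ← mul_assoc, ih, Function.iterate_succ_apply,
      mul_assoc]

theorem exists_pow_commute {S : Set M} (hS : S.Finite) (hgen : Submonoid.closure S = ⊤)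
    (hS_conj : ∀ x, h.conj x ∈ S ↔ x ∈ S) : ∃ m, 0 < m ∧ ∀ x, Δ ^ m * x = x * Δ ^ m := by
  have := hS.to_subtype
  let p := Equiv.Perm.subtypePerm h.conj.toEquiv hS_conj
  have hfix : ∀ x ∈ S, h.conj^[orderOf p] x = x := fun x hx => by
    have hpx := congrArg Subtype.val (Equiv.Perm.ext_iff.mp (pow_orderOf_eq_one p) ⟨x, hx⟩)
    simp only [p, Equiv.Perm.subtypePerm_pow, Equiv.Perm.subtypePerm_apply, Equiv.Perm.coe_pow,
      Equiv.Perm.one_apply] at hpx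
    exact hpx
  refine ⟨orderOf p, orderOf_pos p, Submonoid.dense_induction S hgen (fun x hx => ?_)
    (Commute.one_right _) (fun _ _ => Commute.mul_right)⟩
  rw [h.pow_mul_conj_iterate, hfix x hx]

end IsQuasiCentral

end Garside

open Garside in
/-- there is a bijection `σ` of the simple divisors with
`Δ·μ = σ(μ)·Δ`; some positive power of `Δ` is central; and `σ` preserves
expressibility as a product of `n` atoms, hence preserves the norm. -/
theorem garside_conjugation_by_delta
    {M : Type*} [Monoid M] (Δ : M) (hG : IsGarside M Δ) :
    ∃ σ : M → M,
      Set.BijOn σ (SimpleDivs Δ) (SimpleDivs Δ) ∧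
      (∀ μ ∈ SimpleDivs Δ, Δ * μ = σ μ * Δ) ∧
      (∃ m : ℕ, 0 < m ∧ ∀ x : M, Δ ^ m * x = x * Δ ^ m) ∧
      (∀ μ ∈ SimpleDivs Δ, ∀ n : ℕ, n ∈ exprLengths μ → n ∈ exprLengths (σ μ)) ∧
      (∀ μ ∈ SimpleDivs Δ, norm (σ μ) = norm μ) := by
  have := hG.isCancelMul
  have hq : IsQuasiCentral Δ := isQuasiCentral_of_ldvd_iff_rdvd hG.divisor_iff hG.generates
  exact ⟨hq.conj, hq.conj.toEquiv.bijOn hq.conj_mem_simpleDivs_iff, fun μ _ => hq.mul_conj μ,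
    hq.exists_pow_commute hG.divisors_finite hG.generates hq.conj_mem_simpleDivs_iff,
    fun μ _ => exprLengths_subset_map hq.conj μ, fun μ _ => Garside.norm_map hq.conj μ⟩
end
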